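/- arXiv:2009.11019 — 4 statements merged into one kernel-verified Lean document; each statement's English description precedes it below -/
import Mathlib

section
/- Let m, k with k | m, gcd(2^m - 1, 2^k + 1) = 1, and let d be the inverse of e = 2^m - 2^k - 2 modulo 2^m - 1. For v ∈ F_{2^m} nonzero, the set {x ∈ F_{2^m}* : v·x^(2^k+1) ∈ F_{2^k}*} equals {v^d · z : z ∈ F_{2^k}*} — more precisely, with μ = v^d (so μ^(2^k+1) = v^(-1)), one has v·x^(2^k+1) ∈ F_{2^k}* if and only if x ∈ μ·F_{2^k}*. -/
/-!
Write `n = 2^k + 1` and `N = 2^m - 1`. Since `n + e = N`, the congruence `e d ≡ 1 (mod N)` gives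
`n d ≡ -1 (mod N)`, so `μ^n = v^(n d) = v⁻¹` in the cyclic group `F*` of order `N`. Hence
`v x^n = (μ⁻¹ x)^n`, and since `n` is prime to `N` the power map `y ↦ y^n` is injective on `F*` and
commutes with the Frobenius power `y ↦ y^(2^k)`: the element `(μ⁻¹ x)^n` is fixed by it exactly
when `μ⁻¹ x` is, i.e. when `μ⁻¹ x ∈ F_{2^k}*`.
-/

theorem Nat.dvd_mul_add_one_of_add_eq_of_mul_mod_eq_one {n e d N : ℕ} (h : n + e = N)
    (hd : e * d % N = 1) : N ∣ n * d + 1 := by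
  rw [← ZMod.natCast_eq_zero_iff]
  have hed : ((e * d : ℕ) : ZMod N) = 1 := by
    rw [← ZMod.natCast_mod, hd, Nat.cast_one]
  calc ((n * d + 1 : ℕ) : ZMod N) = ((n + e : ℕ) : ZMod N) * d := by
        push_cast at hed ⊢; rw [← hed]; ring
    _ = 0 := by rw [h, ZMod.natCast_self, zero_mul]

section GroupWithZero

variable {G₀ : Type*} [GroupWithZero G₀]

theorem pow_pow_eq_inv_of_card_sub_one_dvd [Finite G₀] {n d : ℕ}
    (hdvd : Nat.card G₀ - 1 ∣ n * d + 1) {v : G₀} (hv : v ≠ 0) : (v ^ d) ^ n = v⁻¹ := by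
  have hunit : Units.mk0 v hv ^ (n * d + 1) = 1 := by
    rw [← orderOf_dvd_iff_pow_eq_one]
    exact (orderOf_dvd_natCard _).trans ((Nat.card_units G₀).symm ▸ hdvd)
  have hpow : v ^ (n * d + 1) = 1 := by
    simpa using congrArg Units.val hunit
  refine eq_inv_of_mul_eq_one_left ?_
  rwa [← pow_mul, mul_comm d n, ← pow_succ]

theorem pow_left_injOn_of_coprime {n : ℕ} (hn : (Nat.card G₀ - 1).Coprime n) :
    Set.InjOn (· ^ n : G₀ → G₀) {a | a ≠ 0} := by
  intro a ha b hb hab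
  rw [← Nat.card_units] at hn
  have := hn.pow_left_bijective.injective (a₁ := Units.mk0 a ha) (a₂ := Units.mk0 b hb)
    (Units.ext (by simpa using hab))
  simpa using congrArg Units.val this

theorem pow_pow_eq_self_iff_of_coprime {n : ℕ} (hn : (Nat.card G₀ - 1).Coprime n) (q : ℕ)
    {a : G₀} (ha : a ≠ 0) : (a ^ n) ^ q = a ^ n ↔ a ^ q = a := by
  rw [← pow_mul, mul_comm, pow_mul]
  refine ⟨fun h => pow_left_injOn_of_coprime hn (pow_ne_zero q ha) ha h, fun h => by rw [h]⟩

end GroupWithZero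

theorem stmt_9_general (m k : ℕ) (hkpos : 0 < k) (hkm : k < m)
    (hgcd : Nat.gcd (2 ^ m - 1) (2 ^ k + 1) = 1)
    (e d : ℕ) (he : e = 2 ^ m - 2 ^ k - 2) (hd : (e * d) % (2 ^ m - 1) = 1)
    (F : Type*) [Field F] [Fintype F] (hF : Fintype.card F = 2 ^ m)
    (v : F) (hv : v ≠ 0) (μ : F) (hμ : μ = v ^ d) :
    μ ^ (2 ^ k + 1) = v⁻¹ ∧
    ∀ x : F, x ≠ 0 →
      ((v * x ^ (2 ^ k + 1)) ^ (2 ^ k) = v * x ^ (2 ^ k + 1) ∧ v * x ^ (2 ^ k + 1) ≠ 0 ↔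
        ∃ z : F, z ^ (2 ^ k) = z ∧ z ≠ 0 ∧ x = μ * z) := by
  have hcardF : Nat.card F = 2 ^ m := by rwa [Nat.card_eq_fintype_card]
  have hsum : 2 ^ k + 1 + e = 2 ^ m - 1 := by
    have : 2 * 2 ^ k ≤ 2 ^ m := by
      rw [← pow_succ']
      exact Nat.pow_le_pow_right two_pos hkm
    have : 2 ≤ 2 ^ k := Nat.le_self_pow hkpos.ne' 2
    omega
  have hμn : μ ^ (2 ^ k + 1) = v⁻¹ := by
    rw [hμ]
    refine pow_pow_eq_inv_of_card_sub_one_dvd ?_ hv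
    rw [hcardF]
    exact Nat.dvd_mul_add_one_of_add_eq_of_mul_mod_eq_one hsum hd
  have hcop : (Nat.card F - 1).Coprime (2 ^ k + 1) := by rwa [hcardF]
  have hμ0 : μ ≠ 0 := hμ ▸ pow_ne_zero d hv
  refine ⟨hμn, fun x hx => ?_⟩
  have hy0 : μ⁻¹ * x ≠ 0 := mul_ne_zero (inv_ne_zero hμ0) hx
  have hvx : v * x ^ (2 ^ k + 1) = (μ⁻¹ * x) ^ (2 ^ k + 1) := by
    rw [mul_pow, inv_pow, hμn, inv_inv]
  rw [hvx, pow_pow_eq_self_iff_of_coprime hcop _ hy0]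
  constructor
  · rintro ⟨hfix, -⟩
    exact ⟨μ⁻¹ * x, hfix, hy0, (mul_inv_cancel_left₀ hμ0 x).symm⟩
  · rintro ⟨z, hz, hz0, rfl⟩
    rw [inv_mul_cancel_left₀ hμ0]
    exact ⟨hz, pow_ne_zero _ hz0⟩

/-- For nonzero `v ∈ F_{2^m}` and `μ = v^d` (`d` the inverse of `e = 2^m - 2^k - 2`
modulo `2^m - 1`), one has `v·x^(2^k+1) ∈ F_{2^k}^*` iff `x ∈ μ·F_{2^k}^*`. -/
theorem stmt_9 (m k : ℕ) (hm : 0 < m) (hkpos : 0 < k) (hk : k ∣ m) (hkm : k < m)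
    (hgcd : Nat.gcd (2 ^ m - 1) (2 ^ k + 1) = 1)
    (e d : ℕ) (he : e = 2 ^ m - 2 ^ k - 2) (hd : (e * d) % (2 ^ m - 1) = 1)
    (F : Type*) [Field F] [Fintype F] (hF : Fintype.card F = 2 ^ m)
    (v : F) (hv : v ≠ 0) (μ : F) (hμ : μ = v ^ d) :
    μ ^ (2 ^ k + 1) = v⁻¹ ∧
    ∀ x : F, x ≠ 0 →
      ((v * x ^ (2 ^ k + 1)) ^ (2 ^ k) = v * x ^ (2 ^ k + 1) ∧ v * x ^ (2 ^ k + 1) ≠ 0 ↔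
        ∃ z : F, z ^ (2 ^ k) = z ∧ z ≠ 0 ∧ x = μ * z) :=
  stmt_9_general m k hkpos hkm hgcd e d he hd F hF v hv μ hμ
end

section
/- (Computation of Ω_γ) Let k | m, gcd(2^m - 1, 2^k + 1) = 1, e = 2^m - 2^k - 2, d the inverse of e mod 2^m - 1. Let u, v ∈ F_{2^m} with v ≠ 0 and γ ∈ F_{2^k}. Then Ω_γ := ∑_{s ∈ F_{2^m}, Tr^m_k(s) = γ} ∑_{x ∈ F_{2^m}*} (-1)^{Tr_m(ux) + Tr_m(v s x^(2^k+1))} equals 2^m - 2^{m-k} if γ = Tr^m_k(u v^d)², and equals -2^{m-k} otherwise. -/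
/-!
Write `ψ a = (-1) ^ Tr a`, `K = 𝔽_{2^k}` for the kernel of `x ↦ x ^ 2 ^ k - x` and `Z` for
the kernel of `Tr^m_k`. Counting roots of these two linearised polynomials, together with
`im (x ↦ x ^ 2 ^ k - x) ⊆ Z` and `im Tr^m_k ⊆ K`, gives `|K| = 2^k` and `|Z| = 2^(m-k)`, and
makes `K` and `Z` each other's orthogonal complements for the trace form. So the sum of
`ψ (w s)` over the coset `Tr^m_k⁻¹(γ) = s₀ + Z` vanishes unless `w ∈ K`.

The substitution `x = v^d t` (where `v · (v^d)^(2^k+1) = 1`) turns `v x^(2^k+1)` into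
`t^(2^k+1)`, which lies in `K` iff `t` does, because `x ↦ x^(2^k+1)` is injective; for `t ∈ K`
it equals `t²`. Writing `s₀ = r²`, what remains is `|Z| (∑_{t ∈ K} ψ ((u v^d + r) t) - 1)`, and
the inner sum is `|K|` exactly when `u v^d + r ∈ Z`, i.e. when `Tr^m_k(u v^d)² = γ`.
-/

open Finset Polynomial

namespace AddChar

variable {A R : Type*} [AddGroup A] [CommRing R]

lemma sum_addSubgroup_eq_ite [IsDomain R] (ψ : AddChar A R) (H : AddSubgroup A) [Fintype H]
    [Decidable (∀ h ∈ H, ψ h = 1)] :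
    ∑ h : H, ψ h = if ∀ h ∈ H, ψ h = 1 then (Nat.card H : R) else 0 := by
  classical
  rw [← Fintype.card_eq_nat_card]
  convert sum_eq_ite (ψ.compAddMonoidHom H.subtype) using 2
  · rfl
  · rw [eq_zero_iff]
    simp

lemma sum_fiber_eq_mul_sum_ker {B : Type*} [AddGroup B] [Fintype A] [DecidableEq B]
    (ψ : AddChar A R) (f : A →+ B) (a : A) [Fintype f.ker] :
    ∑ s ∈ univ.filter (fun s => f s = f a), ψ s = ψ a * ∑ z : f.ker, ψ z := by
  rw [mul_sum]
  refine Finset.sum_bij' (fun s hs => ⟨-a + s, ?_⟩) (fun z _ => a + z) ?_ ?_ ?_ ?_ ?_ <;>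
    simp_all [← map_add_eq_mul]

end AddChar

section TraceChar

variable {F : Type*} [Field F] [Algebra (ZMod 2) F]

noncomputable def traceChar : AddChar F ℤ where
  toFun a := (-1) ^ (Algebra.trace (ZMod 2) F a).val
  map_zero_eq_one' := by simp
  map_add_eq_mul' a b := by
    rw [map_add]
    generalize Algebra.trace (ZMod 2) F a = x
    generalize Algebra.trace (ZMod 2) F b = y
    revert x y
    decide

lemma traceChar_apply (a : F) : traceChar a = (-1) ^ (Algebra.trace (ZMod 2) F a).val := rfl

lemma traceChar_eq_one_iff (a : F) : traceChar a = 1 ↔ Algebra.trace (ZMod 2) F a = 0 := by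
  rw [traceChar_apply]
  generalize Algebra.trace (ZMod 2) F a = x
  revert x
  decide

lemma trace_pow_two_pow [Fintype F] (a : F) (j : ℕ) :
    Algebra.trace (ZMod 2) F (a ^ 2 ^ j) = Algebra.trace (ZMod 2) F a := by
  have h := Algebra.trace_eq_of_algEquiv
    (FiniteField.frobeniusAlgEquivOfAlgebraic (ZMod 2) F ^ j) a
  rwa [AlgEquiv.coe_pow, FiniteField.coe_frobeniusAlgEquivOfAlgebraic_iterate, ZMod.card] at h

lemma traceChar_sq [Fintype F] (a : F) : traceChar (a ^ 2) = traceChar a := by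
  rw [traceChar_apply, traceChar_apply, ← trace_pow_two_pow a 1, pow_one]

lemma traceChar_isPrimitive [Fintype F] : (traceChar : AddChar F ℤ).IsPrimitive := by
  intro a ha h
  obtain ⟨b, hb⟩ : ∃ b, Algebra.trace (ZMod 2) F (a * b) ≠ 0 := by
    by_contra! hab
    exact ha ((traceForm_nondegenerate (ZMod 2) F).1 a hab)
  exact hb ((traceChar_eq_one_iff _).1 (by rw [← AddChar.mulShift_apply, h, AddChar.one_apply]))

lemma sum_traceChar_mul [Fintype F] [DecidableEq F] (w : F) :
    ∑ x, traceChar (x * w) = if w = 0 then (Fintype.card F : ℤ) else 0 := by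
  exact_mod_cast AddChar.sum_mulShift w traceChar_isPrimitive

def traceOrth (H : AddSubgroup F) : AddSubgroup F where
  carrier := {w | ∀ h ∈ H, Algebra.trace (ZMod 2) F (w * h) = 0}
  add_mem' ha hb h hh := by simp [add_mul, ha h hh, hb h hh]
  zero_mem' h _ := by simp
  neg_mem' ha h hh := by simp [ha h hh]

lemma le_traceOrth_comm {H H' : AddSubgroup F} : H ≤ traceOrth H' ↔ H' ≤ traceOrth H :=
  ⟨fun h x hx y hy => mul_comm x y ▸ h hy x hx, fun h x hx y hy => mul_comm x y ▸ h hy x hx⟩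

variable [Fintype F]

open Classical in
lemma sum_traceChar_mul_addSubgroup (H : AddSubgroup F) [Fintype H] (w : F) :
    ∑ h : H, traceChar (w * h) = if w ∈ traceOrth H then (Nat.card H : ℤ) else 0 := by
  have h := (traceChar.mulShift w).sum_addSubgroup_eq_ite H
  simp only [AddChar.mulShift_apply, traceChar_eq_one_iff] at h
  rw [h]
  exact if_congr Iff.rfl rfl rfl

lemma card_traceOrth_mul_card (H : AddSubgroup F) :
    Nat.card (traceOrth H) * Nat.card H = Fintype.card F := by
  classical
  have hrows : ∑ w : F, ∑ h : H, traceChar (w * h) = Nat.card (traceOrth H) * Nat.card H := by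
    simp_rw [sum_traceChar_mul_addSubgroup, sum_ite, sum_const_zero, add_zero, sum_const,
      nsmul_eq_mul, Nat.card_eq_fintype_card, Fintype.card_subtype]
  have hcols : ∑ w : F, ∑ h : H, traceChar (w * h) = Fintype.card F := by
    rw [sum_comm]
    simp_rw [sum_traceChar_mul, ZeroMemClass.coe_eq_zero]
    simp
  exact_mod_cast hrows.symm.trans hcols

lemma traceOrth_eq_of_le {H H' : AddSubgroup F} (hle : H' ≤ traceOrth H)
    (hcard : Nat.card H' * Nat.card H = Fintype.card F) : traceOrth H = H' := by
  refine (AddSubgroup.eq_of_le_of_card_ge hle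
    (Nat.le_of_mul_le_mul_right ?_ (Nat.card_pos (α := H)))).symm
  rw [card_traceOrth_mul_card, hcard]

end TraceChar

lemma AddMonoidHom.card_ker_le_of_eval {R : Type*} [CommRing R] [IsDomain R] (f : R →+ R)
    (D : ℕ) (q : R[X]) (hq : q.degree < D) (hf : ∀ x, f x = x ^ D + q.eval x) :
    Nat.card f.ker ≤ D := by
  classical
  set p : R[X] := X ^ D + q
  have hp : p ≠ 0 := (monic_X_pow_add hq).ne_zero
  calc Nat.card f.ker ≤ Nat.card p.roots.toFinset :=
        Nat.card_le_card_of_injective (fun z => ⟨z, by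
          rw [Multiset.mem_toFinset, mem_roots hp, IsRoot.def, eval_add, eval_pow, eval_X, ← hf]
          exact z.2⟩) fun a b h => Subtype.ext (congrArg (fun z : p.roots.toFinset => (z : R)) h)
    _ ≤ p.natDegree := by
        rw [Nat.card_eq_fintype_card, Fintype.card_coe]
        exact (Multiset.toFinset_card_le _).trans (card_roots' p)
    _ = D := by
        rw [natDegree_add_eq_left_of_degree_lt (by rwa [degree_X_pow]), natDegree_X_pow]

lemma AddMonoidHom.card_ker_mul_card_range {G G' : Type*} [AddGroup G] [AddGroup G']
    (f : G →+ G') : Nat.card f.ker * Nat.card f.range = Nat.card G := by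
  rw [← AddSubgroup.index_ker, AddSubgroup.card_mul_index]

section RelativeTrace

variable (F : Type*) [Field F] [CharP F 2] (k n : ℕ)

noncomputable def relTrace : F →+ F :=
  ∑ i ∈ range n, (iterateFrobenius F 2 (k * i)).toAddMonoidHom

/-- Its kernel is the subfield `𝔽_{2^k}`. -/
noncomputable def frobSub : F →+ F :=
  (iterateFrobenius F 2 k).toAddMonoidHom - AddMonoidHom.id F

variable {F}

lemma relTrace_apply (x : F) : relTrace F k n x = ∑ i ∈ range n, x ^ 2 ^ (k * i) := by
  simp [relTrace, iterateFrobenius_def]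

lemma frobSub_apply (x : F) : frobSub F k x = x ^ 2 ^ k - x := by
  simp [frobSub, iterateFrobenius_def]

lemma mem_ker_frobSub {x : F} : x ∈ (frobSub F k).ker ↔ x ^ 2 ^ k = x := by
  rw [AddMonoidHom.mem_ker, frobSub_apply, sub_eq_zero]

lemma relTrace_pow_two_pow (j : ℕ) (x : F) :
    relTrace F k n (x ^ 2 ^ j) = relTrace F k n x ^ 2 ^ j := by
  simp_rw [relTrace_apply, sum_pow_char_pow, ← pow_mul, mul_comm]

lemma relTrace_sq (x : F) : relTrace F k n (x ^ 2) = relTrace F k n x ^ 2 := by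
  simpa using relTrace_pow_two_pow k n 1 x

lemma card_ker_frobSub_le (hk : 0 < k) : Nat.card (frobSub F k).ker ≤ 2 ^ k :=
  (frobSub F k).card_ker_le_of_eval _ (-X) (by
    rw [degree_neg, degree_X]; exact_mod_cast Nat.one_lt_two_pow hk.ne')
    fun x => by simp [frobSub_apply, sub_eq_add_neg]

lemma card_ker_relTrace_succ_le (hk : 0 < k) :
    Nat.card (relTrace F k (n + 1)).ker ≤ 2 ^ (k * n) := by
  refine (relTrace F k (n + 1)).card_ker_le_of_eval _ (∑ i ∈ range n, X ^ 2 ^ (k * i)) ?_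
    fun x => by simp [relTrace_apply, sum_range_succ, add_comm, eval_finsetSum]
  refine (degree_sum_le _ _).trans_lt
    ((Finset.sup_lt_iff (WithBot.bot_lt_coe _)).2 fun i hi => ?_)
  rw [degree_X_pow]
  exact_mod_cast Nat.pow_lt_pow_right one_lt_two
    (Nat.mul_lt_mul_of_pos_left (mem_range.1 hi) hk)

variable [Fintype F] {k n} (hF : Fintype.card F = 2 ^ (k * n))
include hF

lemma relTrace_frob (x : F) : relTrace F k n (x ^ 2 ^ k) = relTrace F k n x := by
  have hx : x ^ 2 ^ (k * n) = x := hF ▸ FiniteField.pow_card x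
  have h := sum_range_succ' (fun i => x ^ 2 ^ (k * i)) n
  rw [sum_range_succ, hx, mul_zero, pow_zero, pow_one, add_left_inj] at h
  rw [relTrace_apply, relTrace_apply, h]
  refine sum_congr rfl fun i _ => ?_
  rw [← pow_mul, ← pow_add, mul_add, mul_one, add_comm]

lemma range_frobSub_le : (frobSub F k).range ≤ (relTrace F k n).ker := by
  rintro _ ⟨x, rfl⟩
  rw [AddMonoidHom.mem_ker, frobSub_apply, map_sub, relTrace_frob hF, sub_self]

lemma range_relTrace_le : (relTrace F k n).range ≤ (frobSub F k).ker := by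
  rintro _ ⟨x, rfl⟩
  rw [mem_ker_frobSub, ← relTrace_pow_two_pow, relTrace_frob hF]

variable (hk : 0 < k) (hn : 0 < n)
include hk hn

lemma card_ker_frobSub_and_card_ker_relTrace :
    Nat.card (frobSub F k).ker = 2 ^ k ∧ Nat.card (relTrace F k n).ker = 2 ^ (k * (n - 1)) := by
  obtain ⟨n, rfl⟩ : ∃ n', n = n' + 1 := ⟨n - 1, by omega⟩
  have hK := card_ker_frobSub_le (F := F) k hk
  have hZ := card_ker_relTrace_succ_le (F := F) k n hk
  have hKZ : 2 ^ k * 2 ^ (k * n) ≤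
      Nat.card (frobSub F k).ker * Nat.card (relTrace F k (n + 1)).ker := by
    calc 2 ^ k * 2 ^ (k * n) = Nat.card (frobSub F k).ker * Nat.card (frobSub F k).range := by
          rw [AddMonoidHom.card_ker_mul_card_range, Nat.card_eq_fintype_card, hF, ← pow_add]
          ring_nf
      _ ≤ _ := Nat.mul_le_mul_left _ (AddSubgroup.card_le_of_le (range_frobSub_le hF))
  rw [Nat.add_sub_cancel]
  exact ⟨hK.antisymm (Nat.le_of_mul_le_mul_right (hKZ.trans (Nat.mul_le_mul_left _ hZ))
      (by positivity)),
    hZ.antisymm (Nat.le_of_mul_le_mul_left (hKZ.trans (Nat.mul_le_mul_right _ hK))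
      (by positivity))⟩

lemma card_ker_frobSub_mul_card_ker_relTrace :
    Nat.card (frobSub F k).ker * Nat.card (relTrace F k n).ker = Fintype.card F := by
  obtain ⟨hK, hZ⟩ := card_ker_frobSub_and_card_ker_relTrace hF hk hn
  rw [hK, hZ, hF, ← pow_add, Nat.mul_sub_one, Nat.add_sub_cancel' (Nat.le_mul_of_pos_right k hn)]

lemma range_frobSub : (frobSub F k).range = (relTrace F k n).ker := by
  refine AddSubgroup.eq_of_le_of_card_ge (range_frobSub_le hF)
    (Nat.le_of_mul_le_mul_left ?_ (Nat.card_pos (α := (frobSub F k).ker)))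
  rw [card_ker_frobSub_mul_card_ker_relTrace hF hk hn, AddMonoidHom.card_ker_mul_card_range,
    Nat.card_eq_fintype_card]

lemma range_relTrace : (relTrace F k n).range = (frobSub F k).ker := by
  refine AddSubgroup.eq_of_le_of_card_ge (range_relTrace_le hF)
    (Nat.le_of_mul_le_mul_right ?_ (Nat.card_pos (α := (relTrace F k n).ker)))
  rw [card_ker_frobSub_mul_card_ker_relTrace hF hk hn, mul_comm,
    AddMonoidHom.card_ker_mul_card_range, Nat.card_eq_fintype_card]

end RelativeTrace

section Orthogonality

variable {F : Type*} [Field F] [Fintype F] [Algebra (ZMod 2) F] [CharP F 2] {k n : ℕ}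
  (hF : Fintype.card F = 2 ^ (k * n)) (hk : 0 < k) (hn : 0 < n)
include hF hk hn

lemma ker_frobSub_le_traceOrth : (frobSub F k).ker ≤ traceOrth (relTrace F k n).ker := by
  intro w hw
  rw [← range_frobSub hF hk hn]
  rintro _ ⟨y, rfl⟩
  rw [mem_ker_frobSub] at hw
  rw [frobSub_apply, mul_sub, map_sub, sub_eq_zero]
  conv_lhs => rw [← hw, ← mul_pow, trace_pow_two_pow]

lemma traceOrth_ker_relTrace : traceOrth (relTrace F k n).ker = (frobSub F k).ker :=
  traceOrth_eq_of_le (ker_frobSub_le_traceOrth hF hk hn)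
    (card_ker_frobSub_mul_card_ker_relTrace hF hk hn)

lemma traceOrth_ker_frobSub : traceOrth (frobSub F k).ker = (relTrace F k n).ker :=
  traceOrth_eq_of_le (le_traceOrth_comm.1 (ker_frobSub_le_traceOrth hF hk hn))
    (by rw [mul_comm, card_ker_frobSub_mul_card_ker_relTrace hF hk hn])

variable [DecidableEq F]

lemma sum_fiber_relTrace_traceChar_mul {γ s₀ : F} (hs₀ : relTrace F k n s₀ = γ) (w : F) :
    ∑ s ∈ univ.filter (fun s => relTrace F k n s = γ), traceChar (w * s) =
      traceChar (w * s₀) *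
        if w ^ 2 ^ k = w then (Nat.card (relTrace F k n).ker : ℤ) else 0 := by
  subst hs₀
  have h := (traceChar.mulShift w).sum_fiber_eq_mul_sum_ker (relTrace F k n) s₀
  simp only [AddChar.mulShift_apply] at h
  rw [h, sum_traceChar_mul_addSubgroup, traceOrth_ker_relTrace hF hk hn]
  simp only [mem_ker_frobSub]

lemma sum_ker_frobSub_traceChar_add_mul_sq (β s₀ : F) :
    ∑ t : (frobSub F k).ker, traceChar (β * t + s₀ * t ^ 2) =
      if relTrace F k n β ^ 2 = relTrace F k n s₀ then (Nat.card (frobSub F k).ker : ℤ)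
      else 0 := by
  obtain ⟨r, rfl⟩ := FiniteField.isSquare_of_char_two (ringChar.eq F 2) s₀
  have h : ∀ t : F, traceChar (β * t + r * r * t ^ 2) = traceChar ((β + r) * t) := fun t => by
    rw [AddChar.map_add_eq_mul, ← sq, ← mul_pow, traceChar_sq, ← AddChar.map_add_eq_mul, add_mul]
  simp_rw [h, sum_traceChar_mul_addSubgroup, traceOrth_ker_frobSub hF hk hn]
  refine if_congr ?_ rfl rfl
  rw [AddMonoidHom.mem_ker, map_add, CharTwo.add_eq_zero, ← sq, relTrace_sq, CharTwo.sq_inj]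

end Orthogonality

lemma pow_pow_eq_self_iff {M : Type*} [CommMonoid M] {a b : ℕ}
    (hb : Function.Injective fun x : M => x ^ b) (t : M) :
    (t ^ b) ^ a = t ^ b ↔ t ^ a = t := by
  rw [← pow_mul, mul_comm, pow_mul]
  exact hb.eq_iff

namespace FiniteField

variable {F : Type*} [Field F] [Fintype F]

lemma pow_injective_of_coprime {b : ℕ} (hb : 0 < b) (h : Nat.Coprime (Fintype.card F - 1) b) :
    Function.Injective fun x : F => x ^ b := by
  intro x y hxy
  simp only at hxy
  by_cases hy : y = 0
  · subst hy
    rwa [zero_pow hb.ne', pow_eq_zero_iff hb.ne'] at hxy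
  have hx : x ≠ 0 := by
    rintro rfl
    rw [zero_pow hb.ne', eq_comm, pow_eq_zero_iff hb.ne'] at hxy
    exact hy hxy
  have hpow_b : (x / y) ^ b = 1 := by rw [div_pow, hxy, div_self (pow_ne_zero _ hy)]
  have hpow_card : (x / y) ^ (Fintype.card F - 1) = 1 :=
    pow_card_sub_one_eq_one _ (div_ne_zero hx hy)
  have hpow_gcd := pow_gcd_eq_one.2 ⟨hpow_card, hpow_b⟩
  rwa [h.gcd_eq_one, pow_one, div_eq_one_iff_eq hy] at hpow_gcd

lemma pow_pow_mul_self_eq_one {v : F} (hv : v ≠ 0) {a e d : ℕ}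
    (hae : a + e = Fintype.card F - 1) (hd : e * d % (Fintype.card F - 1) = 1) :
    (v ^ d) ^ a * v = 1 := by
  have hN : v ^ (Fintype.card F - 1) = 1 := pow_card_sub_one_eq_one v hv
  have hed : v ^ (e * d) = v := by
    rw [← Nat.div_add_mod (e * d) (Fintype.card F - 1), hd, pow_add, pow_mul, hN, one_pow,
      one_mul, pow_one]
  calc (v ^ d) ^ a * v = v ^ ((a + e) * d) := by
        rw [add_mul, pow_add, hed, ← pow_mul, mul_comm d]
    _ = 1 := by rw [hae, pow_mul, hN, one_pow]

end FiniteField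

section Substitution

variable {F : Type*} [Field F] [Fintype F] [DecidableEq F] [Algebra (ZMod 2) F] [CharP F 2]
  {k : ℕ}

lemma sum_filter_mem_ker_frobSub_eq_sum_ker {μ v : F} (hμ : μ ^ (2 ^ k + 1) * v = 1)
    (hinj : Function.Injective fun x : F => x ^ (2 ^ k + 1)) (u s₀ : F) :
    ∑ x ∈ univ.filter (fun x => (v * x ^ (2 ^ k + 1)) ^ 2 ^ k = v * x ^ (2 ^ k + 1)),
        traceChar (u * x) * traceChar (v * x ^ (2 ^ k + 1) * s₀) =
      ∑ t : (frobSub F k).ker, traceChar (u * μ * t + s₀ * t ^ 2) := by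
  have hμ0 : μ ≠ 0 := ne_zero_pow (by positivity) (left_ne_zero_of_mul_eq_one hμ)
  have hsubst : ∀ t, v * (μ * t) ^ (2 ^ k + 1) = t ^ (2 ^ k + 1) := fun t => by
    rw [mul_pow, ← mul_assoc, mul_comm v, hμ, one_mul]
  symm
  refine sum_bij' (fun t _ => μ * t) (fun x hx => ⟨μ⁻¹ * x, ?_⟩) ?_ ?_ ?_ ?_ ?_
  · rw [mem_filter, ← mul_inv_cancel_left₀ hμ0 x, hsubst, pow_pow_eq_self_iff hinj] at hx
    exact (mem_ker_frobSub k).2 hx.2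
  · intro t _
    rw [mem_filter, hsubst, pow_pow_eq_self_iff hinj]
    exact ⟨mem_univ _, (mem_ker_frobSub k).1 t.2⟩
  · exact fun _ _ => mem_univ _
  · intro t _
    ext
    simp [hμ0]
  · intro x _
    simp [hμ0]
  · intro t _
    have ht : (t : F) ^ (2 ^ k + 1) = t ^ 2 := by
      rw [pow_succ, (mem_ker_frobSub k).1 t.2, sq]
    rw [hsubst, ht, ← AddChar.map_add_eq_mul, mul_assoc, mul_comm _ s₀]

end Substitution

section CharacterSum

variable {F : Type*} [Field F] [Fintype F] [DecidableEq F] [Algebra (ZMod 2) F] [CharP F 2]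
  {k n : ℕ}

theorem sum_fiber_relTrace_sum_traceChar (hF : Fintype.card F = 2 ^ (k * n)) (hk : 0 < k)
    (hn : 0 < n) {u v μ γ : F} (hμ : μ ^ (2 ^ k + 1) * v = 1)
    (hinj : Function.Injective fun x : F => x ^ (2 ^ k + 1)) (hγ : γ ^ 2 ^ k = γ) :
    ∑ s ∈ univ.filter (fun s => relTrace F k n s = γ),
      ∑ x ∈ univ.filter (fun x : F => x ≠ 0),
        traceChar (u * x) * traceChar (v * s * x ^ (2 ^ k + 1)) =
      if γ = relTrace F k n (u * μ) ^ 2 then (2 ^ (k * n) - 2 ^ (k * (n - 1)) : ℤ)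
      else -(2 ^ (k * (n - 1)) : ℤ) := by
  obtain ⟨s₀, hs₀⟩ : γ ∈ (relTrace F k n).range := by
    rw [range_relTrace hF hk hn]
    exact (mem_ker_frobSub k).2 hγ
  set Z : ℤ := (Nat.card (relTrace F k n).ker : ℤ)
  set inner : F → ℤ := fun x => if (v * x ^ (2 ^ k + 1)) ^ 2 ^ k = v * x ^ (2 ^ k + 1) then
    traceChar (u * x) * traceChar (v * x ^ (2 ^ k + 1) * s₀) else 0
  have hinner : ∀ x, ∑ s ∈ univ.filter (fun s => relTrace F k n s = γ),
      traceChar (u * x) * traceChar (v * s * x ^ (2 ^ k + 1)) = Z * inner x := fun x => by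
    simp_rw [mul_right_comm v _ (x ^ (2 ^ k + 1))]
    rw [← mul_sum, sum_fiber_relTrace_traceChar_mul hF hk hn hs₀]
    simp only [inner]
    split_ifs <;> ring
  have hinner0 : inner 0 = 1 := by simp [inner]
  calc _ = Z * ∑ x ∈ univ.erase 0, inner x := by
        rw [sum_comm, filter_ne', mul_sum]
        exact sum_congr rfl fun x _ => hinner x
    _ = Z * ((if relTrace F k n (u * μ) ^ 2 = γ then (Nat.card (frobSub F k).ker : ℤ)
          else 0) - 1) := by
        rw [sum_erase_eq_sub (mem_univ 0), hinner0, ← sum_filter,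
          sum_filter_mem_ker_frobSub_eq_sum_ker hμ hinj, ← hs₀,
          sum_ker_frobSub_traceChar_add_mul_sq hF hk hn]
    _ = _ := by
        have hKZ := card_ker_frobSub_mul_card_ker_relTrace hF hk hn
        have hZ := (card_ker_frobSub_and_card_ker_relTrace hF hk hn).2
        rw [hF] at hKZ
        simp only [Z, eq_comm (a := γ)]
        split_ifs
        · rw [mul_sub, mul_one, mul_comm, ← Nat.cast_mul, hKZ, hZ]
          push_cast; ring
        · rw [hZ]; push_cast; ring

end CharacterSum

/-- Computation of `Ω_γ`: for `v ≠ 0` and `γ ∈ F_{2^k}`,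
`∑_{Tr^m_k(s)=γ} ∑_{x≠0} (-1)^{Tr_m(ux)+Tr_m(v s x^(2^k+1))}` equals
`2^m - 2^{m-k}` if `γ = Tr^m_k(u v^d)²`, and `-2^{m-k}` otherwise. -/
theorem stmt_11 (m k : ℕ) (hm : 0 < m) (hkpos : 0 < k) (hk : k ∣ m)
    (hgcd : Nat.gcd (2 ^ m - 1) (2 ^ k + 1) = 1)
    (e d : ℕ) (he : e = 2 ^ m - 2 ^ k - 2) (hd : (e * d) % (2 ^ m - 1) = 1)
    (F : Type*) [Field F] [Fintype F] [DecidableEq F] [Algebra (ZMod 2) F]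
    (hF : Fintype.card F = 2 ^ m)
    (relTr : F → F) (hrelTr : ∀ s, relTr s = ∑ i ∈ Finset.range (m / k), s ^ (2 ^ (k * i)))
    (u v : F) (hv : v ≠ 0) (γ : F) (hγ : γ ^ (2 ^ k) = γ) :
    ∑ s ∈ Finset.univ.filter (fun s : F => relTr s = γ),
      ∑ x ∈ Finset.univ.filter (fun x : F => x ≠ 0),
        (-1 : ℤ) ^ (Algebra.trace (ZMod 2) F (u * x)).val *
          (-1 : ℤ) ^ (Algebra.trace (ZMod 2) F (v * s * x ^ (2 ^ k + 1))).val =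
      if γ = (relTr (u * v ^ d)) ^ 2 then (2 ^ m - 2 ^ (m - k) : ℤ)
      else -(2 ^ (m - k) : ℤ) := by
  have : CharP F 2 := charP_of_injective_algebraMap' (ZMod 2) 2
  obtain ⟨n, rfl⟩ := hk
  obtain rfl : relTr = relTrace F k n := funext fun s => by
    rw [hrelTr, Nat.mul_div_cancel_left n hkpos, relTrace_apply]
  have hae : 2 ^ k + 1 + e = Fintype.card F - 1 := by
    have he0 : e ≠ 0 := by rintro rfl; simp at hd
    rw [hF]
    generalize 2 ^ k = a at he he0 ⊢
    omega
  have hμ := FiniteField.pow_pow_mul_self_eq_one hv hae (hF ▸ hd)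
  have hinj := FiniteField.pow_injective_of_coprime (Nat.succ_pos _) (hF ▸ hgcd)
  rw [← Nat.mul_sub_one]
  exact sum_fiber_relTrace_sum_traceChar hF hkpos (Nat.pos_of_mul_pos_left hm) hμ hinj hγ
end

section
/- (Partial spread vectorial bent, generic b) In the setup of the vectorial PS⁻ construction (partial spread S of (2^k - 1)·2^{m-k} subspaces of V = F_2^{2m}, f : V → B with preimages of nonzero group elements being unions of 2^{m-k} subspaces minus 0), suppose b ∈ V is nonzero and no subspace U ∈ S satisfies b·x = 0 for all x ∈ U. Then for every nontrivial character χ of B, ∑_{x ∈ V} χ(f(x)) (-1)^{b·x} = 2^m. -/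
open Finset

/-- Vectorial PS⁻ construction, generic `b`: if `b ≠ 0` is orthogonal to no spread
member, then `∑_x χ(f x)(-1)^{b·x} = 2^m` for every nontrivial character `χ`. -/
theorem stmt_14 (m k : ℕ) (hkpos : 0 < k) (hkm : k ≤ m)
    (B : Type*) [AddCommGroup B] [Fintype B] [DecidableEq B] (hB : Fintype.card B = 2 ^ k)
    (S : Fin ((2 ^ k - 1) * 2 ^ (m - k)) → Submodule (ZMod 2) (Fin (2 * m) → ZMod 2))
    (hScard : ∀ i, Nat.card (S i) = 2 ^ m)
    (hSdisj : ∀ i j, i ≠ j → S i ⊓ S j = ⊥)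
    (g : Fin ((2 ^ k - 1) * 2 ^ (m - k)) → B)
    (hg0 : ∀ i, g i ≠ 0)
    (hgcount : ∀ γ : B, γ ≠ 0 →
      (Finset.univ.filter (fun i => g i = γ)).card = 2 ^ (m - k))
    (f : (Fin (2 * m) → ZMod 2) → B)
    (hf1 : ∀ i, ∀ x ∈ S i, x ≠ 0 → f x = g i)
    (hf2 : ∀ x, (∀ i, x ∉ S i) → f x = 0)
    (hf3 : f 0 = 0)
    (χ : AddChar B ℂ) (hχ : ∃ γ : B, χ γ ≠ 1)
    (b : Fin (2 * m) → ZMod 2) (hb : b ≠ 0)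
    (hborth : ∀ i, ∃ x ∈ S i, ∑ j, b j * x j ≠ 0) :
    ∑ x : Fin (2 * m) → ZMod 2, χ (f x) * (-1 : ℂ) ^ (∑ j, b j * x j).val = 2 ^ m := by
  classical
  have hζ : (-1 : ℂ) ^ (2 : ℕ) = 1 := by norm_num
  set ψ : AddChar (ZMod 2) ℂ := AddChar.zmodChar 2 hζ with hψdef
  have Ladd : ∀ x y : Fin (2 * m) → ZMod 2,
      (∑ j, b j * (x + y) j) = (∑ j, b j * x j) + ∑ j, b j * y j := by
    intro x y
    simp [Pi.add_apply, mul_add, Finset.sum_add_distrib]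
  set L : (Fin (2 * m) → ZMod 2) →+ ZMod 2 :=
    AddMonoidHom.mk' (fun x => ∑ j, b j * x j) Ladd with hLdef
  set Φ : AddChar (Fin (2 * m) → ZMod 2) ℂ := ψ.compAddMonoidHom L with hΦdef
  have hΦ : ∀ x, Φ x = (-1 : ℂ) ^ (∑ j, b j * x j).val := fun x => rfl
  have hΦ0 : Φ 0 = 1 := by rw [hΦ]; simp
  -- Φ is nontrivial
  have hΦ1 : Φ ≠ 1 := by
    obtain ⟨j0, hj0⟩ : ∃ j0, b j0 ≠ 0 := by
      by_contra h
      push_neg at h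
      exact hb (funext fun j => h j)
    intro hone
    have h1 : Φ (Pi.single j0 1) = 1 := by rw [hone]; rfl
    rw [hΦ] at h1
    have hsum : (∑ j, b j * (Pi.single j0 1 : Fin (2 * m) → ZMod 2) j) = b j0 := by
      rw [Finset.sum_eq_single j0]
      · simp
      · intro j _ hj; simp [Pi.single_eq_of_ne hj]
      · simp
    rw [hsum] at h1
    have hv0 : (b j0).val ≠ 0 := fun h => hj0 ((ZMod.val_eq_zero _).mp h)
    have hv2 : (b j0).val < 2 := ZMod.val_lt _
    have hv1 : (b j0).val = 1 := by omega
    rw [hv1] at h1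
    norm_num at h1
  -- total character sum vanishes
  have hsumΦ : ∑ x : Fin (2 * m) → ZMod 2, Φ x = 0 := AddChar.sum_eq_zero_of_ne_one hΦ1
  -- character sum over each spread member
  have hsumU : ∀ i, ∑ x ∈ Finset.univ.filter (· ∈ S i), Φ x = 0 := by
    intro i
    have := AddChar.sum_eq_zero_of_ne_one (R := S i) (R' := ℂ)
      (ψ := Φ.compAddMonoidHom (S i).subtype.toAddMonoidHom) ?_
    · rw [Finset.sum_subtype (p := (· ∈ S i)) (Finset.univ.filter (· ∈ S i)) (fun x => by simp) (fun x => Φ x)]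
      exact this
    · obtain ⟨x, hx, hxne⟩ := hborth i
      rw [AddChar.ne_one_iff]
      refine ⟨⟨x, hx⟩, ?_⟩
      show Φ x ≠ 1
      rw [hΦ]
      have hv1 : (∑ j, b j * x j).val = 1 := by
        have hv0 : (∑ j, b j * x j).val ≠ 0 := fun h => hxne ((ZMod.val_eq_zero _).mp h)
        have hv2 : (∑ j, b j * x j).val < 2 := ZMod.val_lt _
        omega
      rw [hv1]; norm_num
  -- the punctured spread members
  set T : Fin ((2 ^ k - 1) * 2 ^ (m - k)) → Finset (Fin (2 * m) → ZMod 2) :=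
    fun i => (Finset.univ.filter (· ∈ S i)).erase 0 with hTdef
  have hT : ∀ i, ∑ x ∈ T i, Φ x = -1 := by
    intro i
    have h0 : (0 : Fin (2 * m) → ZMod 2) ∈ Finset.univ.filter (· ∈ S i) := by
      simp [Submodule.zero_mem]
    rw [hTdef, Finset.sum_erase_eq_sub h0, hsumU i, hΦ0]
    ring
  have hdisjT : ∀ i j, i ≠ j → Disjoint (T i) (T j) := by
    intro i j hij
    rw [Finset.disjoint_left]
    intro x hxi hxj
    rw [hTdef, Finset.mem_erase, Finset.mem_filter] at hxi hxj
    have : x ∈ S i ⊓ S j := ⟨hxi.2.2, hxj.2.2⟩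
    rw [hSdisj i j hij] at this
    exact hxi.1 (Submodule.mem_bot _ |>.mp this)
  -- rewrite the sum using Φ and split off the vanishing full character sum
  have key : ∑ x : Fin (2 * m) → ZMod 2, χ (f x) * (-1 : ℂ) ^ (∑ j, b j * x j).val
      = ∑ x : Fin (2 * m) → ZMod 2, (χ (f x) - 1) * Φ x := by
    have : ∀ x : Fin (2 * m) → ZMod 2,
        χ (f x) * (-1 : ℂ) ^ (∑ j, b j * x j).val = (χ (f x) - 1) * Φ x + Φ x := by
      intro x; rw [hΦ]; ring
    rw [Finset.sum_congr rfl (fun x _ => this x), Finset.sum_add_distrib, hsumΦ, add_zero]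
  -- restrict to the union of the punctured spread members
  have hvanish : ∀ x ∈ (Finset.univ : Finset (Fin (2 * m) → ZMod 2)),
      x ∉ Finset.univ.biUnion T → (χ (f x) - 1) * Φ x = 0 := by
    intro x _ hx
    simp only [Finset.mem_biUnion, Finset.mem_univ, true_and, not_exists] at hx
    have hfx : f x = 0 := by
      by_cases hx0 : x = 0
      · rw [hx0]; exact hf3
      · refine hf2 x fun i hxi => ?_
        exact hx i (by rw [hTdef]; exact Finset.mem_erase.mpr ⟨hx0, by simp [hxi]⟩)
    rw [hfx, AddChar.map_zero_eq_one]
    ring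
  rw [key, ← Finset.sum_subset (Finset.subset_univ (Finset.univ.biUnion T)) hvanish,
    Finset.sum_biUnion (fun i _ j _ hij => hdisjT i j hij)]
  -- evaluate the sum over each punctured spread member
  have hinner : ∀ i, ∑ x ∈ T i, (χ (f x) - 1) * Φ x = 1 - χ (g i) := by
    intro i
    have : ∀ x ∈ T i, (χ (f x) - 1) * Φ x = (χ (g i) - 1) * Φ x := by
      intro x hx
      rw [hTdef, Finset.mem_erase, Finset.mem_filter] at hx
      rw [hf1 i x hx.2.2 hx.1]
    rw [Finset.sum_congr rfl this, ← Finset.mul_sum, hT i]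
    ring
  rw [Finset.sum_congr rfl (fun i _ => hinner i), Finset.sum_sub_distrib]
  -- the sum of χ ∘ g
  have hχ1 : χ ≠ 1 := by
    obtain ⟨γ, hγ⟩ := hχ
    intro h; rw [h] at hγ; exact hγ (AddChar.one_apply γ)
  have hχsum : ∑ γ : B, χ γ = 0 := AddChar.sum_eq_zero_of_ne_one hχ1
  have hgsum : ∑ i, χ (g i) = -(2 : ℂ) ^ (m - k) := by
    rw [← Finset.sum_fiberwise Finset.univ g (fun i => χ (g i))]
    have hfib : ∀ γ : B, ∑ i ∈ Finset.univ.filter (fun i => g i = γ), χ (g i)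
        = ((Finset.univ.filter (fun i => g i = γ)).card : ℂ) * χ γ := by
      intro γ
      rw [Finset.sum_congr rfl (fun i hi => by
        rw [(Finset.mem_filter.mp hi).2]), Finset.sum_const, nsmul_eq_mul]
    rw [Finset.sum_congr rfl (fun γ _ => hfib γ)]
    rw [← Finset.sum_subset (Finset.subset_univ (Finset.univ \ {0}))
      (fun γ _ hγ => ?_)]
    · have : ∀ γ ∈ Finset.univ \ ({0} : Finset B),
          ((Finset.univ.filter (fun i => g i = γ)).card : ℂ) * χ γ
            = (2 : ℂ) ^ (m - k) * χ γ := by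
        intro γ hγ
        rw [Finset.mem_sdiff, Finset.mem_singleton] at hγ
        rw [hgcount γ hγ.2]
        push_cast
        ring
      rw [Finset.sum_congr rfl this, ← Finset.mul_sum]
      have : ∑ γ ∈ Finset.univ \ ({0} : Finset B), χ γ = -1 := by
        rw [Finset.sum_sdiff_eq_sub (Finset.subset_univ _), hχsum,
          Finset.sum_singleton, AddChar.map_zero_eq_one]
        ring
      rw [this]
      ring
    · have hγ0 : γ = 0 := by
        by_contra h
        exact hγ (Finset.mem_sdiff.mpr ⟨Finset.mem_univ _, by simpa using h⟩)
      have : Finset.univ.filter (fun i => g i = γ) = ∅ := by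
        rw [Finset.filter_eq_empty_iff]
        intro i _
        rw [hγ0]
        exact hg0 i
      rw [this]
      simp
  rw [hgsum, Finset.sum_const, Finset.card_univ, Fintype.card_fin, nsmul_eq_mul, mul_one]
  -- final arithmetic
  have h1 : (1 : ℕ) ≤ 2 ^ k := Nat.one_le_two_pow
  push_cast [h1]
  rw [sub_neg_eq_add]
  have : ((2 : ℂ) ^ k - 1) * 2 ^ (m - k) + 2 ^ (m - k) = 2 ^ k * 2 ^ (m - k) := by ring
  rw [this, ← pow_add, Nat.add_sub_cancel' hkm]
end

section
/- (Partial spread vectorial bent, b orthogonal to one subspace) In the vectorial PS⁻ construction, suppose b ∈ V is nonzero and there is exactly one subspace U₀ ∈ S (in the preimage of γ₀ ∈ B, γ₀ ≠ 0) with b·x = 0 for all x ∈ U₀. Then for every nontrivial character χ of B, ∑_{x ∈ V} χ(f(x)) (-1)^{b·x} = 2^m · χ(γ₀); in particular this sum has absolute value 2^m. -/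
/-!
Write `ψ x = (-1) ^ (b ⬝ᵥ x)`, a nontrivial character of `V`. Since `χ ∘ f` equals `χ (g i)` on
`Sᵢ \ {0}` and `1` elsewhere, the sum is `∑ᵢ (χ (g i) - 1) (∑_{Sᵢ} ψ - 1)`. The inner character
sum is `2 ^ m` on `S i₀`, where `ψ` is trivial, and `0` on every other member. Each nonzero `γ` has
`2 ^ (m - k)` preimages under `g`, so `∑ᵢ χ (g i) = -2 ^ (m - k)`, and this cancels against the
number `2 ^ m - 2 ^ (m - k)` of spread members, leaving `2 ^ m χ (g i₀)`.
-/

open Finset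

namespace AddChar

variable {G R : Type*} [AddGroup G] [Fintype G] [CommRing R]

lemma sum_addSubgroup_eq_card (ψ : AddChar G R) (H : AddSubgroup G) [DecidablePred (· ∈ H)]
    (h : ∀ x ∈ H, ψ x = 1) : ∑ x ∈ univ.filter (· ∈ H), ψ x = Nat.card H := by
  rw [sum_congr rfl fun x hx => h x (mem_filter.1 hx).2, sum_const, nsmul_one,
    Nat.card_eq_fintype_card, Fintype.card_subtype]

lemma sum_addSubgroup_eq_zero [IsDomain R] (ψ : AddChar G R) (H : AddSubgroup G)
    [DecidablePred (· ∈ H)] (h : ∃ x ∈ H, ψ x ≠ 1) : ∑ x ∈ univ.filter (· ∈ H), ψ x = 0 := by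
  obtain ⟨y, hyH, hy⟩ := h
  rw [sum_subtype _ (p := (· ∈ H)) (fun x => by simp) ψ]
  exact (sum_eq_ite (ψ.compAddMonoidHom H.subtype)).trans
    (if_neg (ne_zero_iff.2 ⟨⟨y, hyH⟩, hy⟩))

lemma sum_erase_zero_eq_neg_one [IsDomain R] [CharZero R] [DecidableEq G] {ψ : AddChar G R}
    (hψ : ψ ≠ 0) :
    ∑ x ∈ univ.erase 0, ψ x = -1 := by
  rw [sum_erase_eq_sub (mem_univ 0), sum_eq_zero_iff_ne_zero.2 hψ, map_zero_eq_one, zero_sub]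

end AddChar

section SignChar

variable {ι : Type*} [Fintype ι]

def dotSignChar (b : ι → ZMod 2) : AddChar (ι → ZMod 2) ℂ :=
  (AddChar.zmodChar 2 (neg_one_sq : (-1 : ℂ) ^ 2 = 1)).compAddMonoidHom
    (AddMonoidHom.mk' (b ⬝ᵥ ·) (dotProduct_add b))

lemma dotSignChar_apply (b x : ι → ZMod 2) : dotSignChar b x = (-1) ^ (b ⬝ᵥ x).val := rfl

lemma dotSignChar_eq_one_iff {b x : ι → ZMod 2} : dotSignChar b x = 1 ↔ b ⬝ᵥ x = 0 := by
  rw [dotSignChar_apply, neg_one_pow_eq_one_iff_even (by norm_num),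
    ← ZMod.natCast_eq_zero_iff_even, ZMod.natCast_zmod_val]

lemma dotSignChar_ne_zero [DecidableEq ι] {b : ι → ZMod 2} (hb : b ≠ 0) : dotSignChar b ≠ 0 := by
  obtain ⟨j, hj⟩ := Function.ne_iff.1 hb
  refine AddChar.ne_zero_iff.2 ⟨Pi.single j 1, ?_⟩
  rwa [Ne, dotSignChar_eq_one_iff, dotProduct_single, mul_one]

end SignChar

lemma sum_mul_eq_of_pairwise_disjoint {ι V R : Type*} [Fintype ι] [Fintype V] [DecidableEq V]
    [CommRing R] (A : ι → Finset V) (hA : Pairwise (Function.onFun Disjoint A)) (φ : V → R)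
    (c : ι → R) (c₀ : R) (hin : ∀ i, ∀ x ∈ A i, φ x = c i) (hout : ∀ x, (∀ i, x ∉ A i) → φ x = c₀)
    (w : V → R) :
    ∑ x, φ x * w x = c₀ * ∑ x, w x + ∑ i, (c i - c₀) * ∑ x ∈ A i, w x := by
  have hsupp : ∑ x, (φ x - c₀) * w x = ∑ x ∈ univ.biUnion A, (φ x - c₀) * w x := by
    refine (sum_subset (subset_univ _) fun x _ hx => ?_).symm
    rw [hout x fun i hi => hx (mem_biUnion.2 ⟨i, mem_univ i, hi⟩), sub_self, zero_mul]
  calc ∑ x, φ x * w x = c₀ * ∑ x, w x + ∑ x, (φ x - c₀) * w x := by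
        rw [mul_sum, ← sum_add_distrib]; exact sum_congr rfl fun x _ => by ring
    _ = c₀ * ∑ x, w x + ∑ i, (c i - c₀) * ∑ x ∈ A i, w x := by
        rw [hsupp, sum_biUnion fun i _ j _ hij => hA hij]
        congr 1
        refine sum_congr rfl fun i _ => ?_
        rw [mul_sum]
        exact sum_congr rfl fun x hx => by rw [hin i x hx]

lemma sum_comp_eq_mul_sum_erase_zero {ι B R : Type*} [Fintype ι] [Fintype B] [DecidableEq B]
    [Zero B] [CommSemiring R] (g : ι → B) (c : ℕ) (hg0 : ∀ i, g i ≠ 0)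
    (hcount : ∀ γ, γ ≠ 0 → #{i | g i = γ} = c) (φ : B → R) :
    ∑ i, φ (g i) = c * ∑ γ ∈ univ.erase 0, φ γ := by
  have hfiber : ∀ γ, ∑ i with g i = γ, φ (g i) = #{i | g i = γ} * φ γ := fun γ => by
    rw [sum_congr rfl fun i hi => congrArg φ (mem_filter.1 hi).2, sum_const, nsmul_eq_mul]
  rw [← sum_fiberwise univ g fun i => φ (g i), ← add_sum_erase _ _ (mem_univ 0), mul_sum]
  simp only [hfiber]
  rw [filter_false_of_mem fun i _ => hg0 i, card_empty, Nat.cast_zero, zero_mul, zero_add]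
  exact sum_congr rfl fun γ hγ => by rw [hcount γ (ne_of_mem_erase hγ)]

lemma sum_addChar_comp_mul_eq_sum_submodule {ι R V B : Type*} [Fintype ι] [Ring R]
    [AddCommGroup V] [Module R V] [Fintype V] [DecidableEq V] [AddCommGroup B]
    (S : ι → Submodule R V) [∀ i, DecidablePred (· ∈ S i)] (hS : ∀ i j, i ≠ j → S i ⊓ S j = ⊥)
    (g : ι → B) (f : V → B) (hf1 : ∀ i, ∀ x ∈ S i, x ≠ 0 → f x = g i)
    (hf2 : ∀ x, (∀ i, x ∉ S i) → f x = 0) (hf3 : f 0 = 0)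
    (χ : AddChar B ℂ) (ψ : AddChar V ℂ) (hψ : ψ ≠ 0) :
    ∑ x, χ (f x) * ψ x = ∑ i, (χ (g i) - 1) * (∑ x ∈ univ.filter (· ∈ S i), ψ x - 1) := by
  set A : ι → Finset V := fun i => (univ.filter (· ∈ S i)).erase 0
  have hmemA : ∀ i x, x ∈ A i ↔ x ∈ S i ∧ x ≠ 0 := fun i x => by simp [A, and_comm]
  have hA : Pairwise (Function.onFun Disjoint A) := by
    refine fun i j hij => disjoint_left.2 fun x hi hj => ?_
    rw [hmemA] at hi hj
    exact hi.2 ((Submodule.mem_bot R).1 (hS i j hij ▸ Submodule.mem_inf.2 ⟨hi.1, hj.1⟩))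
  have hin : ∀ i, ∀ x ∈ A i, χ (f x) = χ (g i) := fun i x hx => by
    rw [hmemA] at hx; rw [hf1 i x hx.1 hx.2]
  have hout : ∀ x, (∀ i, x ∉ A i) → χ (f x) = 1 := fun x hx => by
    suffices f x = 0 by rw [this, AddChar.map_zero_eq_one]
    by_cases hx0 : x = 0
    · rw [hx0, hf3]
    · exact hf2 x fun i hi => hx i ((hmemA i x).2 ⟨hi, hx0⟩)
  rw [sum_mul_eq_of_pairwise_disjoint A hA _ _ 1 hin hout, AddChar.sum_eq_zero_iff_ne_zero.2 hψ,
    mul_zero, zero_add]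
  refine sum_congr rfl fun i _ => ?_
  rw [sum_erase_eq_sub (by simp), AddChar.map_zero_eq_one]

theorem stmt_15_general (m k : ℕ) (hkm : k ≤ m)
    (B : Type*) [AddCommGroup B] [Fintype B] [DecidableEq B]
    (S : Fin ((2 ^ k - 1) * 2 ^ (m - k)) → Submodule (ZMod 2) (Fin (2 * m) → ZMod 2))
    (hScard : ∀ i, Nat.card (S i) = 2 ^ m)
    (hSdisj : ∀ i j, i ≠ j → S i ⊓ S j = ⊥)
    (g : Fin ((2 ^ k - 1) * 2 ^ (m - k)) → B)
    (hg0 : ∀ i, g i ≠ 0)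
    (hgcount : ∀ γ : B, γ ≠ 0 →
      (Finset.univ.filter (fun i => g i = γ)).card = 2 ^ (m - k))
    (f : (Fin (2 * m) → ZMod 2) → B)
    (hf1 : ∀ i, ∀ x ∈ S i, x ≠ 0 → f x = g i)
    (hf2 : ∀ x, (∀ i, x ∉ S i) → f x = 0)
    (hf3 : f 0 = 0)
    (χ : AddChar B ℂ) (hχ : ∃ γ : B, χ γ ≠ 1)
    (b : Fin (2 * m) → ZMod 2) (hb : b ≠ 0)
    (i₀ : Fin ((2 ^ k - 1) * 2 ^ (m - k))) (γ₀ : B) (hγ₀ : γ₀ = g i₀)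
    (hi₀ : ∀ x ∈ S i₀, ∑ j, b j * x j = 0)
    (hother : ∀ i, i ≠ i₀ → ∃ x ∈ S i, ∑ j, b j * x j ≠ 0) :
    (∑ x : Fin (2 * m) → ZMod 2, χ (f x) * (-1 : ℂ) ^ (∑ j, b j * x j).val =
        2 ^ m * χ γ₀) ∧
    ‖(∑ x : Fin (2 * m) → ZMod 2,
        χ (f x) * (-1 : ℂ) ^ (∑ j, b j * x j).val)‖ = 2 ^ m := by
  classical
  have hblock : ∀ i,
      ∑ x ∈ univ.filter (· ∈ S i), dotSignChar b x = if i = i₀ then 2 ^ m else 0 := by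
    intro i
    split_ifs with hi
    · subst hi
      refine (AddChar.sum_addSubgroup_eq_card _ (S i).toAddSubgroup
        fun x hx => dotSignChar_eq_one_iff.2 (hi₀ x hx)).trans ?_
      exact_mod_cast hScard i
    · obtain ⟨x, hxS, hx⟩ := hother i hi
      exact AddChar.sum_addSubgroup_eq_zero _ (S i).toAddSubgroup
        ⟨x, hxS, mt dotSignChar_eq_one_iff.1 hx⟩
  have hcharsum : ∑ i, χ (g i) = -2 ^ (m - k) := by
    rw [sum_comp_eq_mul_sum_erase_zero g _ hg0 hgcount,
      AddChar.sum_erase_zero_eq_neg_one (AddChar.ne_zero_iff.2 hχ)]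
    push_cast; ring
  have hcard : (((2 ^ k - 1) * 2 ^ (m - k) : ℕ) : ℂ) = 2 ^ m - 2 ^ (m - k) := by
    rw [Nat.cast_mul, Nat.cast_sub Nat.one_le_two_pow]
    push_cast
    rw [sub_mul, one_mul, ← pow_add, Nat.add_sub_cancel' hkm]
  have hsum : ∑ x : Fin (2 * m) → ZMod 2, χ (f x) * (-1 : ℂ) ^ (∑ j, b j * x j).val =
      2 ^ m * χ γ₀ := by
    change ∑ x, χ (f x) * dotSignChar b x = _
    rw [sum_addChar_comp_mul_eq_sum_submodule S hSdisj g f hf1 hf2 hf3 χ _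
      (dotSignChar_ne_zero hb)]
    simp only [hblock, mul_sub, mul_ite, mul_zero, mul_one, sum_sub_distrib, sum_ite_eq', mem_univ,
      if_true, sum_const, card_univ, Fintype.card_fin, nsmul_eq_mul]
    rw [hcharsum, hcard, hγ₀]
    ring
  refine ⟨hsum, ?_⟩
  rw [hsum, norm_mul, AddChar.norm_apply, norm_pow]
  norm_num

/-- Vectorial PS⁻ construction, `b` orthogonal to exactly one spread member `U₀`
(in the preimage of `γ₀ ≠ 0`): then `∑_x χ(f x)(-1)^{b·x} = 2^m·χ(γ₀)`, which has
absolute value `2^m`. -/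
theorem stmt_15 (m k : ℕ) (hkpos : 0 < k) (hkm : k ≤ m)
    (B : Type*) [AddCommGroup B] [Fintype B] [DecidableEq B] (hB : Fintype.card B = 2 ^ k)
    (S : Fin ((2 ^ k - 1) * 2 ^ (m - k)) → Submodule (ZMod 2) (Fin (2 * m) → ZMod 2))
    (hScard : ∀ i, Nat.card (S i) = 2 ^ m)
    (hSdisj : ∀ i j, i ≠ j → S i ⊓ S j = ⊥)
    (g : Fin ((2 ^ k - 1) * 2 ^ (m - k)) → B)
    (hg0 : ∀ i, g i ≠ 0)
    (hgcount : ∀ γ : B, γ ≠ 0 →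
      (Finset.univ.filter (fun i => g i = γ)).card = 2 ^ (m - k))
    (f : (Fin (2 * m) → ZMod 2) → B)
    (hf1 : ∀ i, ∀ x ∈ S i, x ≠ 0 → f x = g i)
    (hf2 : ∀ x, (∀ i, x ∉ S i) → f x = 0)
    (hf3 : f 0 = 0)
    (χ : AddChar B ℂ) (hχ : ∃ γ : B, χ γ ≠ 1)
    (b : Fin (2 * m) → ZMod 2) (hb : b ≠ 0)
    (i₀ : Fin ((2 ^ k - 1) * 2 ^ (m - k))) (γ₀ : B) (hγ₀ : γ₀ = g i₀)
    (hi₀ : ∀ x ∈ S i₀, ∑ j, b j * x j = 0)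
    (hother : ∀ i, i ≠ i₀ → ∃ x ∈ S i, ∑ j, b j * x j ≠ 0) :
    (∑ x : Fin (2 * m) → ZMod 2, χ (f x) * (-1 : ℂ) ^ (∑ j, b j * x j).val =
        2 ^ m * χ γ₀) ∧
    ‖(∑ x : Fin (2 * m) → ZMod 2,
        χ (f x) * (-1 : ℂ) ^ (∑ j, b j * x j).val)‖ = 2 ^ m :=
  stmt_15_general m k hkm B S hScard hSdisj g hg0 hgcount f hf1 hf2 hf3 χ hχ b hb i₀ γ₀ hγ₀ hi₀
    hother
end
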